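/- Lemma (the paper's Lemma 3.7, stability of the birth level). Let r be an order with levels on X, let (τ₀, ω₀) be a persistence pair of r, let ε > 0, and let q = (q̂, ≼_q) ∈ R_ε. Then q̂(τ_{q,ω₀}) − ε/2 < r̂(τ₀). -/

import Mathlib

open scoped Classical

namespace StableVol

/-- A finite abstract simplicial complex of dimension `n`: a finite family of nonempty
finite subsets of the vertex set, closed under nonempty subsets, in which every element
is contained in an element of cardinality `n+1`. -/
structure NComplex (V : Type*) [DecidableEq V] (n : ℕ) where
  X : Finset (Finset V)
  nonempty_mem : ∀ σ ∈ X, σ.Nonempty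
  down_closed : ∀ σ ∈ X, ∀ σ' : Finset V, σ' ⊆ σ → σ'.Nonempty → σ' ∈ X
  contained_top : ∀ σ ∈ X, ∃ ω ∈ X, σ ⊆ ω ∧ ω.card = n + 1

variable {V : Type*} [DecidableEq V] {n : ℕ}

/-- An `n`-cell is either an `n`-simplex (`some ω`) or the formal cell `ω∞` (`none`). -/
abbrev Cell (V : Type*) := Option (Finset V)

/-- `τ` is a face of the cell `c`.  For `c = some ω` this means that `ω` is an
`n`-simplex of `X` containing `τ`; the faces of `ω∞ = none` are the `(n-1)`-simplices
having exactly one `n`-simplex coface. -/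
def faceCell (C : NComplex V n) (τ : Finset V) : Cell V → Prop
  | some ω => ω ∈ C.X ∧ ω.card = n + 1 ∧ τ ⊆ ω
  | none => {ω | ω ∈ C.X ∧ ω.card = n + 1 ∧ τ ⊆ ω}.ncard = 1

def IsCell (C : NComplex V n) : Cell V → Prop
  | some ω => ω ∈ C.X ∧ ω.card = n + 1
  | none => True

/-- Adjacency in the dual graph, restricted to the edge set `E ⊆ X^(n-1)`. -/
def adj (C : NComplex V n) (E : Set (Finset V)) (c c' : Cell V) : Prop :=
  ∃ τ ∈ E, faceCell C τ c ∧ faceCell C τ c' ∧ c ≠ c'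

/-- `KV C E c₀`: the set of `n`-cells in the connected component of `c₀` in the
subgraph of the dual graph with edge set `E`. -/
def KV (C : NComplex V n) (E : Set (Finset V)) (c₀ : Cell V) : Set (Cell V) :=
  {c | Relation.ReflTransGen (adj C E) c₀ c}

/-- Every `(n-1)`-simplex of `X` is a face of exactly two `n`-cells. -/
def TwoCofaces (C : NComplex V n) : Prop :=
  ∀ τ ∈ C.X, τ.card = n →
    ∃ c₁ c₂ : Cell V, c₁ ≠ c₂ ∧ ∀ c : Cell V, faceCell C τ c ↔ (c = c₁ ∨ c = c₂)

/-- The dual graph (with full edge set `X^(n-1)`) is connected. -/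
def DualConn (C : NComplex V n) : Prop :=
  ∀ c c' : Cell V, IsCell C c → IsCell C c' →
    c' ∈ KV C {τ | τ ∈ C.X ∧ τ.card = n} c

/-- A level function: monotone with respect to strict inclusion of simplices. -/
def IsLevelFun (C : NComplex V n) (lev : Finset V → ℝ) : Prop :=
  ∀ σ ∈ C.X, ∀ σ' ∈ C.X, σ ⊂ σ' → lev σ ≤ lev σ'

/-- `(lev, slt)` is an order with levels on `X`: `lev` is a level function and `slt`
is (the strict form of) a linear order on `X` refining both `lev` and strict
inclusion. -/
def IsOWL (C : NComplex V n) (lev : Finset V → ℝ)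
    (slt : Finset V → Finset V → Prop) : Prop :=
  IsLevelFun C lev ∧
  (∀ σ ∈ C.X, ¬ slt σ σ) ∧
  (∀ σ ∈ C.X, ∀ σ' ∈ C.X, ∀ σ'' ∈ C.X, slt σ σ' → slt σ' σ'' → slt σ σ'') ∧
  (∀ σ ∈ C.X, ∀ σ' ∈ C.X, σ ≠ σ' → slt σ σ' ∨ slt σ' σ) ∧
  (∀ σ ∈ C.X, ∀ σ' ∈ C.X, slt σ σ' → lev σ ≤ lev σ') ∧
  (∀ σ ∈ C.X, ∀ σ' ∈ C.X, σ ⊂ σ' → slt σ σ')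

/-- Extension of a strict order on simplices to `n`-cells, `ω∞ = none` being the
unique maximum. -/
def cslt (slt : Finset V → Finset V → Prop) : Cell V → Cell V → Prop
  | some σ, some σ' => slt σ σ'
  | some _, none => True
  | none, _ => False

/-- `m` is the maximum cell of the set `S` with respect to the order `slt`. -/
def IsMaxCell (slt : Finset V → Finset V → Prop) (S : Set (Cell V)) (m : Cell V) :
    Prop :=
  m ∈ S ∧ ∀ c ∈ S, c ≠ m → cslt slt c m

/-- Edge set of `G(≻ σ₀)`: the `(n-1)`-simplices strictly above `σ₀`. -/
def Egt (C : NComplex V n) (slt : Finset V → Finset V → Prop) (σ₀ : Finset V) :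
    Set (Finset V) :=
  {τ | τ ∈ C.X ∧ τ.card = n ∧ slt σ₀ τ}

/-- Edge set of `G(⪰ σ₀)`. -/
def Ege (C : NComplex V n) (slt : Finset V → Finset V → Prop) (σ₀ : Finset V) :
    Set (Finset V) :=
  {τ | τ ∈ C.X ∧ τ.card = n ∧ (τ = σ₀ ∨ slt σ₀ τ)}

/-- Edge set of `G(lev ≥ s)`. -/
def Elev (C : NComplex V n) (lev : Finset V → ℝ) (s : ℝ) : Set (Finset V) :=
  {τ | τ ∈ C.X ∧ τ.card = n ∧ s ≤ lev τ}

/-- `(τ₀, ω₀)` is a persistence pair of the order `slt`: the two `n`-cells having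
`τ₀` as a face lie in distinct connected components of `G(≻ τ₀)`, and `ω₀` is the
smaller of the two maximum cells of these two components. -/
def IsPersPair (C : NComplex V n) (slt : Finset V → Finset V → Prop)
    (τ₀ ω₀ : Finset V) : Prop :=
  τ₀ ∈ C.X ∧ τ₀.card = n ∧ ω₀ ∈ C.X ∧ ω₀.card = n + 1 ∧
  ∃ c₁ c₂ : Cell V, c₁ ≠ c₂ ∧ faceCell C τ₀ c₁ ∧ faceCell C τ₀ c₂ ∧
    c₂ ∉ KV C (Egt C slt τ₀) c₁ ∧
    ∃ m₂ : Cell V,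
      IsMaxCell slt (KV C (Egt C slt τ₀) c₁) (some ω₀) ∧
      IsMaxCell slt (KV C (Egt C slt τ₀) c₂) m₂ ∧
      cslt slt (some ω₀) m₂

/-- The optimal volume `OV(q, ω₀) = K_V(G(≻_q τ_{q,ω₀}), ω₀)`. -/
def OV (C : NComplex V n) (slt : Finset V → Finset V → Prop) (ω₀ : Finset V) :
    Set (Cell V) :=
  {c | ∃ τ, IsPersPair C slt τ ω₀ ∧ c ∈ KV C (Egt C slt τ) (some ω₀)}

/-- The stable volume `SV_ε(r, τ₀, ω₀) = K_V(G(r̂ ≥ r̂(τ₀) + ε), ω₀)`. -/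
def SV (C : NComplex V n) (lev : Finset V → ℝ) (τ₀ ω₀ : Finset V) (ε : ℝ) :
    Set (Cell V) :=
  KV C (Elev C lev (lev τ₀ + ε)) (some ω₀)

/-- `(qlev, qslt) ∈ R_ε`: an order with levels uniformly `ε/2`-close to `rlev`
satisfying the `(r, ω₀)`-order condition. -/
def InR (C : NComplex V n) (rlev : Finset V → ℝ)
    (rslt : Finset V → Finset V → Prop) (ω₀ : Finset V) (ε : ℝ)
    (qlev : Finset V → ℝ) (qslt : Finset V → Finset V → Prop) : Prop :=
  IsOWL C qlev qslt ∧ (∀ σ ∈ C.X, |qlev σ - rlev σ| < ε / 2) ∧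
  (∀ σ ∈ C.X, rslt σ ω₀ → qslt σ ω₀)

/-- `F_{ε,n}`: the `n`-simplices with level at least `lev τ₀ + ε` that precede `ω₀`. -/
def Fcells (C : NComplex V n) (lev : Finset V → ℝ)
    (slt : Finset V → Finset V → Prop) (τ₀ ω₀ : Finset V) (ε : ℝ) :
    Set (Finset V) :=
  {σ | σ ∈ C.X ∧ σ.card = n + 1 ∧ lev τ₀ + ε ≤ lev σ ∧ slt σ ω₀}

/-- `F_{ε,n-1}`: the `(n-1)`-simplices with level at least `lev τ₀ + ε` that
precede `ω₀`. -/
def Fedges (C : NComplex V n) (lev : Finset V → ℝ)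
    (slt : Finset V → Finset V → Prop) (τ₀ ω₀ : Finset V) (ε : ℝ) :
    Set (Finset V) :=
  {σ | σ ∈ C.X ∧ σ.card = n ∧ lev τ₀ + ε ≤ lev σ ∧ slt σ ω₀}

/-- `τ*(∂z)`: the `ℤ/2ℤ`-sum of the coefficients of `z` over the `n`-simplex
cofaces of `τ`. -/
def bsum (C : NComplex V n) (τ : Finset V) (z : Finset V → ZMod 2) : ZMod 2 :=
  ∑ ω ∈ C.X.filter (fun ω => ω.card = n + 1 ∧ τ ⊆ ω), z ω

/-- A feasible chain `z = ω₀ + Σ_{ω ∈ F_{ε,n}} α_ω ω` with `τ*(∂z) = 0` for all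
`τ ∈ F_{ε,n-1}`. -/
def IsFeasible (C : NComplex V n) (lev : Finset V → ℝ)
    (slt : Finset V → Finset V → Prop) (τ₀ ω₀ : Finset V) (ε : ℝ)
    (z : Finset V → ZMod 2) : Prop :=
  z ω₀ = 1 ∧
  (∀ ω : Finset V, ω ≠ ω₀ → ω ∉ Fcells C lev slt τ₀ ω₀ ε → z ω = 0) ∧
  (∀ τ ∈ Fedges C lev slt τ₀ ω₀ ε, bsum C τ z = 0)

/-- `‖z‖₀`: the number of simplices of `X` with nonzero coefficient in `z`. -/
def norm0 (C : NComplex V n) (z : Finset V → ZMod 2) : ℕ :=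
  (C.X.filter fun ω => z ω ≠ 0).card

/-- The level function of the perturbed order `q(r, η, A)`. -/
noncomputable def pertLev (C : NComplex V n) (rlev : Finset V → ℝ) (η : ℝ)
    (A : Set (Finset V)) : Finset V → ℝ :=
  fun σ => if (σ ∈ C.X ∧ σ.card = n + 1) ∨ σ ∈ A then rlev σ + η else rlev σ - η

/-- The strict order of the perturbed order `q(r, η, A)`. -/
def pertSlt (C : NComplex V n) (rlev : Finset V → ℝ)
    (rslt : Finset V → Finset V → Prop) (η : ℝ) (A : Set (Finset V)) :
    Finset V → Finset V → Prop :=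
  fun σ σ' => pertLev C rlev η A σ < pertLev C rlev η A σ' ∨
    (pertLev C rlev η A σ = pertLev C rlev η A σ' ∧ rslt σ σ')

/-- The `(n-1)`-simplices that are edges of the connected component of `c₀` in the
subgraph with edge set `E`. -/
def compEdges (C : NComplex V n) (E : Set (Finset V)) (c₀ : Cell V) :
    Set (Finset V) :=
  {τ | τ ∈ E ∧ ∃ c, faceCell C τ c ∧ c ∈ KV C E c₀}

/-- `IsPath C E c c' vs es`: `vs` is the vertex list and `es` the edge list of a walk
from `c` to `c'` in the subgraph of the dual graph with edge set `E`. -/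
inductive IsPath (C : NComplex V n) (E : Set (Finset V)) :
    Cell V → Cell V → List (Cell V) → List (Finset V) → Prop
  | nil (c : Cell V) : IsPath C E c c [c] []
  | cons {c c' c'' : Cell V} {vs : List (Cell V)} {es : List (Finset V)}
      {τ : Finset V} : τ ∈ E → faceCell C τ c → faceCell C τ c' → c ≠ c' →
      IsPath C E c' c'' vs es → IsPath C E c c'' (c :: vs) (τ :: es)


/-!
Suppose `q̂(τ_{q,ω₀}) - ε/2 ≥ r̂(τ₀)`. Since the levels are `ε/2`-close, every edge of
`G(⪰_q τ_{q,ω₀})` has `r̂`-level above `r̂(τ₀)`, so it is an edge of `G(≻_r τ₀)`. Adding the edge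
`τ_{q,ω₀}` joins `ω₀` to a cell `μ ≻_q ω₀`, which therefore lies in the `r`-component of `ω₀`,
where `ω₀` is the `r`-maximum. So `μ ≠ ω∞` and `μ ≺_r ω₀`; the order condition gives `μ ≺_q ω₀`,
a contradiction.
-/

section

variable {C : NComplex V n}

instance instSymmAdj (E : Set (Finset V)) : Std.Symm (adj C E) where
  symm _ _ := fun ⟨τ, hτ, h₁, h₂, hne⟩ => ⟨τ, hτ, h₂, h₁, hne.symm⟩

lemma KV_mono {E E' : Set (Finset V)} (hE : E ⊆ E') (c₀ : Cell V) :
    KV C E c₀ ⊆ KV C E' c₀ := fun _ h =>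
  Relation.ReflTransGen.mono (fun _ _ ⟨τ, hτ, h₁, h₂, hne⟩ => ⟨τ, hE hτ, h₁, h₂, hne⟩) _ _ h

lemma mem_KV_symm {E : Set (Finset V)} {c₀ c : Cell V} (h : c ∈ KV C E c₀) :
    c₀ ∈ KV C E c :=
  symm h

lemma mem_KV_trans {E : Set (Finset V)} {c₀ c c' : Cell V} (h : c ∈ KV C E c₀)
    (h' : c' ∈ KV C E c) : c' ∈ KV C E c₀ :=
  Relation.ReflTransGen.trans h h'

lemma mem_X_of_some_mem_KV {E : Set (Finset V)} {ω μ : Finset V} (hω : ω ∈ C.X)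
    (h : some μ ∈ KV C E (some ω)) : μ ∈ C.X := by
  rcases Relation.ReflTransGen.cases_tail h with h | ⟨_, _, τ, _, _, hface, _⟩
  · exact Option.some_injective _ h ▸ hω
  · exact hface.1

lemma Egt_subset_Ege (slt : Finset V → Finset V → Prop) (σ : Finset V) :
    Egt C slt σ ⊆ Ege C slt σ :=
  fun _ ⟨hX, hcard, hgt⟩ => ⟨hX, hcard, Or.inr hgt⟩

section Order

variable {lev : Finset V → ℝ} {slt : Finset V → Finset V → Prop}

lemma IsOWL.slt_of_lev_lt (h : IsOWL C lev slt) {σ σ' : Finset V} (hσ : σ ∈ C.X)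
    (hσ' : σ' ∈ C.X) (hlt : lev σ < lev σ') : slt σ σ' := by
  obtain ⟨-, -, -, htotal, hmono, -⟩ := h
  refine (htotal σ hσ σ' hσ' (fun h => hlt.ne (congrArg lev h))).resolve_right fun h' => ?_
  exact (hmono σ' hσ' σ hσ h').not_gt hlt

lemma IsOWL.lev_le_of_slt (h : IsOWL C lev slt) {σ σ' : Finset V} (hσ : σ ∈ C.X)
    (hσ' : σ' ∈ C.X) (hlt : slt σ σ') : lev σ ≤ lev σ' :=
  h.2.2.2.2.1 σ hσ σ' hσ' hlt

lemma IsOWL.irrefl (h : IsOWL C lev slt) {σ : Finset V} (hσ : σ ∈ C.X) : ¬ slt σ σ :=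
  h.2.1 σ hσ

lemma IsOWL.asymm (h : IsOWL C lev slt) {σ σ' : Finset V} (hσ : σ ∈ C.X)
    (hσ' : σ' ∈ C.X) (hlt : slt σ σ') : ¬ slt σ' σ :=
  fun hgt => h.irrefl hσ (h.2.2.1 σ hσ σ' hσ' σ hσ hlt hgt)

end Order

lemma Ege_subset_Egt {rlev qlev : Finset V → ℝ} {rslt qslt : Finset V → Finset V → Prop}
    (hr : IsOWL C rlev rslt) (hq : IsOWL C qlev qslt) {ε : ℝ}
    (hclose : ∀ σ ∈ C.X, |qlev σ - rlev σ| < ε / 2) {τ₀ τ : Finset V} (hτ₀ : τ₀ ∈ C.X)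
    (hτ : τ ∈ C.X) (hle : rlev τ₀ ≤ qlev τ - ε / 2) :
    Ege C qslt τ ⊆ Egt C rslt τ₀ := by
  rintro σ ⟨hσ, hcard, hge⟩
  have hqle : qlev τ ≤ qlev σ := by
    rcases hge with rfl | hgt
    · exact le_rfl
    · exact hq.lev_le_of_slt hτ hσ hgt
  have hσclose := (abs_lt.mp (hclose σ hσ)).2
  refine ⟨hσ, hcard, hr.slt_of_lev_lt hτ₀ hσ ?_⟩
  linarith

namespace IsPersPair

variable {slt : Finset V → Finset V → Prop} {τ ω : Finset V}

lemma exists_gt_mem_KV_Ege (h : IsPersPair C slt τ ω) :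
    ∃ m, cslt slt (some ω) m ∧ m ∈ KV C (Ege C slt τ) (some ω) := by
  obtain ⟨hτ, hcard, -, -, c₁, c₂, hne, hf₁, hf₂, -, m₂, hmax₁, hmax₂, hlt⟩ := h
  have hsub := Egt_subset_Ege (C := C) slt τ
  have hω_c₁ : c₁ ∈ KV C (Ege C slt τ) (some ω) := mem_KV_symm (KV_mono hsub c₁ hmax₁.1)
  have hc₁_c₂ : c₂ ∈ KV C (Ege C slt τ) c₁ :=
    .single ⟨τ, ⟨hτ, hcard, Or.inl rfl⟩, hf₁, hf₂, hne⟩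
  exact ⟨m₂, hlt, mem_KV_trans hω_c₁ (mem_KV_trans hc₁_c₂ (KV_mono hsub c₂ hmax₂.1))⟩

lemma cslt_of_mem_KV (h : IsPersPair C slt τ ω) {c : Cell V}
    (hc : c ∈ KV C (Egt C slt τ) (some ω)) (hne : c ≠ some ω) : cslt slt c (some ω) := by
  obtain ⟨-, -, -, -, c₁, -, -, -, -, -, -, hmax₁, -⟩ := h
  exact hmax₁.2 c (mem_KV_trans hmax₁.1 hc) hne

end IsPersPair

end

theorem birth_level_stability_general
    (C : NComplex V n)
    (rlev : Finset V → ℝ) (rslt : Finset V → Finset V → Prop)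
    (hr : IsOWL C rlev rslt)
    (τ₀ ω₀ : Finset V) (hpair : IsPersPair C rslt τ₀ ω₀)
    (ε : ℝ)
    (qlev : Finset V → ℝ) (qslt : Finset V → Finset V → Prop)
    (hq : InR C rlev rslt ω₀ ε qlev qslt) :
    ∀ τq : Finset V, IsPersPair C qslt τq ω₀ → qlev τq - ε / 2 < rlev τ₀ := by
  intro τq hqpair
  by_contra! hle
  obtain ⟨hqowl, hclose, hcond⟩ := hq
  have hω₀ : ω₀ ∈ C.X := hpair.2.2.1
  obtain ⟨m, hω₀m, hm⟩ := hqpair.exists_gt_mem_KV_Ege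
  have hm_r : m ∈ KV C (Egt C rslt τ₀) (some ω₀) :=
    KV_mono (Ege_subset_Egt hr hqowl hclose hpair.1 hqpair.1 hle) _ hm
  cases m with
  | none => exact hpair.cslt_of_mem_KV hm_r (Option.some_ne_none ω₀).symm
  | some μ =>
    have hμ : μ ∈ C.X := mem_X_of_some_mem_KV hω₀ hm_r
    have hne : some μ ≠ some ω₀ := by
      rintro ⟨⟩
      exact hqowl.irrefl hω₀ hω₀m
    exact hqowl.asymm hω₀ hμ hω₀m (hcond μ hμ (hpair.cslt_of_mem_KV hm_r hne))

/-- Lemma 3.7, stability of the birth level: for any `q ∈ R_ε`,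
`q̂(τ_{q,ω₀}) - ε/2 < r̂(τ₀)`. -/
theorem birth_level_stability
    (hn : 2 ≤ n) (C : NComplex V n) (htwo : TwoCofaces C) (hconn : DualConn C)
    (rlev : Finset V → ℝ) (rslt : Finset V → Finset V → Prop)
    (hr : IsOWL C rlev rslt)
    (τ₀ ω₀ : Finset V) (hpair : IsPersPair C rslt τ₀ ω₀)
    (ε : ℝ) (hε : 0 < ε)
    (qlev : Finset V → ℝ) (qslt : Finset V → Finset V → Prop)
    (hq : InR C rlev rslt ω₀ ε qlev qslt) :
    ∀ τq : Finset V, IsPersPair C qslt τq ω₀ → qlev τq - ε / 2 < rlev τ₀ :=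
  birth_level_stability_general C rlev rslt hr τ₀ ω₀ hpair ε qlev qslt hq

end StableVol
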